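/- Let ρ, c, k, ℓ, γ, D∞ be positive reals, α = k/(ρc), 0 < ε < 1, and suppose h₀ > (1/D∞)√(γ(1-ε)ρℓk/2). Let ξ > 0 be the unique solution of (D∞c/(ℓ√π))·exp(-x²)/(k/(h₀√(πα)) + erf(x)) = x + (γ(1-ε)√π/(2D∞))·(k/(h₀√(πα)) + erf(x))·exp(x²), and set D₀ = D∞·erf(ξ)/(k/(h₀√(πα)) + erf(ξ)). Then 0 < D₀ < D∞, and ξ is the unique positive solution of the equation G₂(x) = D₀c/(ℓ√π), where F∞(x) = exp(-x²)/erf(x), G₀(x) = x + (γ(1-ε)√π/(2D₀))·(1/F∞(x)), and G₂(x) = G₀(x)/F∞(x). -/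

import Mathlib

open Real Filter Set Topology

/-- The error function `erf x = (2/√π) ∫₀ˣ exp(-t²) dt`. -/
noncomputable def erf (x : ℝ) : ℝ := (2 / Real.sqrt π) * ∫ t in (0:ℝ)..x, Real.exp (-t ^ 2)

/-!
Writing `E x = erf x · exp x² = 1 / F∞ x`, the temperature-problem function is
`G₂ x = (x + C₀ E x) E x` with `C₀ = γ(1-ε)√π/(2D₀) > 0`, a product of two nonnegative strictly
increasing functions on `[0, ∞)`; hence `G₂ x = D₀ c/(ℓ√π)` has at most one positive root.
The choice of `D₀` gives `C₀ erf ξ = C∞ (k/(h₀√(πα)) + erf ξ)`, which turns the convective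
equation at `ξ`, multiplied by `E ξ`, into `G₂ ξ = D₀ c/(ℓ√π)`.
-/

theorem erf_strictMono : StrictMono erf := by
  intro a b hab
  have hint (u v : ℝ) : IntervalIntegrable (fun t => exp (-t ^ 2)) MeasureTheory.volume u v :=
    (by fun_prop : Continuous fun t : ℝ => exp (-t ^ 2)).intervalIntegrable u v
  have hpos : 0 < ∫ t in a..b, exp (-t ^ 2) :=
    intervalIntegral.intervalIntegral_pos_of_pos (hint a b) (fun _ => exp_pos _) hab
  have hsplit := intervalIntegral.integral_add_adjacent_intervals (hint 0 a) (hint a b)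
  unfold erf
  rw [← hsplit, mul_add]
  have : 0 < 2 / √π := by positivity
  linarith [mul_pos this hpos]

theorem erf_zero : erf 0 = 0 := by simp [erf]

theorem erf_pos {x : ℝ} (hx : 0 < x) : 0 < erf x := erf_zero ▸ erf_strictMono hx

theorem erf_nonneg {x : ℝ} (hx : 0 ≤ x) : 0 ≤ erf x := erf_zero ▸ erf_strictMono.monotone hx

noncomputable def erfExpSq (x : ℝ) : ℝ := erf x * exp (x ^ 2)

theorem one_div_exp_neg_sq_div_erf (x : ℝ) : 1 / (exp (-x ^ 2) / erf x) = erfExpSq x := by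
  rw [one_div_div, div_eq_mul_inv, ← exp_neg, neg_neg, erfExpSq]

theorem erfExpSq_nonneg {x : ℝ} (hx : 0 ≤ x) : 0 ≤ erfExpSq x :=
  mul_nonneg (erf_nonneg hx) (exp_pos _).le

theorem erfExpSq_strictMonoOn : StrictMonoOn erfExpSq (Ici 0) := by
  intro a ha b _ hab
  have hsq : a ^ 2 < b ^ 2 := pow_lt_pow_left₀ hab ha two_ne_zero
  exact mul_lt_mul'' (erf_strictMono hab) (exp_lt_exp.mpr hsq) (erf_nonneg ha) (exp_pos _).le

theorem strictMonoOn_add_mul_erfExpSq_mul_erfExpSq {C : ℝ} (hC : 0 ≤ C) :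
    StrictMonoOn (fun x => (x + C * erfExpSq x) * erfExpSq x) (Ici 0) := by
  intro a ha b hb hab
  have hE := erfExpSq_strictMonoOn ha hb hab
  have hEa := erfExpSq_nonneg ha
  refine mul_lt_mul'' ?_ hE (add_nonneg ha (mul_nonneg hC hEa)) hEa
  exact add_lt_add_of_lt_of_le hab (mul_le_mul_of_nonneg_left hE.le hC)

theorem div_add_lt_self {D e β : ℝ} (hD : 0 < D) (he : 0 < e) (hβ : 0 < β) :
    D * e / (β + e) < D := by
  rw [div_lt_iff₀ (by positivity)]
  nlinarith

theorem add_mul_erfExpSq_mul_eq_of_convective {D β a c L ξ : ℝ} (hD : 0 < D) (hξ : 0 < ξ)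
    (hβ : 0 ≤ β)
    (h : D * c / L * exp (-ξ ^ 2) / (β + erf ξ) = ξ + a / (2 * D) * (β + erf ξ) * exp (ξ ^ 2)) :
    (ξ + a / (2 * (D * erf ξ / (β + erf ξ))) * erfExpSq ξ) * erfExpSq ξ =
      D * erf ξ / (β + erf ξ) * c / L := by
  have he := erf_pos hξ
  have hS : 0 < β + erf ξ := by positivity
  have hx : exp (-ξ ^ 2) * exp (ξ ^ 2) = 1 := by rw [← exp_add]; simp
  have hC : a / (2 * (D * erf ξ / (β + erf ξ))) * erfExpSq ξ =
      a / (2 * D) * (β + erf ξ) * exp (ξ ^ 2) := by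
    rw [erfExpSq]; field_simp
  rw [hC, ← h, erfExpSq]
  field_simp
  linear_combination c / L * hx

theorem stmt_13_general (ρ c k ℓ γ Dinf h₀ α ε ξ D₀ : ℝ)
    (hρ : 0 < ρ) (hc : 0 < c) (hk : 0 < k) (hγ : 0 < γ) (hD : 0 < Dinf)
    (hα : α = k / (ρ * c)) (hε1 : ε < 1)
    (hh : h₀ > (1 / Dinf) * Real.sqrt (γ * (1 - ε) * ρ * ℓ * k / 2))
    (hξpos : 0 < ξ)
    (hξeq : (Dinf * c / (ℓ * Real.sqrt π)) * Real.exp (-ξ ^ 2) /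
        (k / (h₀ * Real.sqrt (π * α)) + erf ξ) =
      ξ + (γ * (1 - ε) * Real.sqrt π / (2 * Dinf)) *
        (k / (h₀ * Real.sqrt (π * α)) + erf ξ) * Real.exp (ξ ^ 2))
    (hD₀ : D₀ = Dinf * erf ξ / (k / (h₀ * Real.sqrt (π * α)) + erf ξ))
    (Finf G₀ G₂ : ℝ → ℝ)
    (hFinf : ∀ x, Finf x = Real.exp (-x ^ 2) / erf x)
    (hG₀ : ∀ x, G₀ x = x + (γ * (1 - ε) * Real.sqrt π / (2 * D₀)) * (1 / Finf x))
    (hG₂ : ∀ x, G₂ x = G₀ x / Finf x) :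
    0 < D₀ ∧ D₀ < Dinf ∧
    (G₂ ξ = D₀ * c / (ℓ * Real.sqrt π)) ∧
    (∀ y > (0:ℝ), G₂ y = D₀ * c / (ℓ * Real.sqrt π) → y = ξ) := by
  have hh₀ : 0 < h₀ := lt_of_le_of_lt (by positivity) hh
  have hβ : 0 < k / (h₀ * √(π * α)) := by rw [hα]; positivity
  have herf := erf_pos hξpos
  have hD₀pos : 0 < D₀ := by rw [hD₀]; positivity
  have hC : 0 ≤ γ * (1 - ε) * √π / (2 * D₀) := by
    have := sub_pos.mpr hε1
    positivity
  have hG₂E : G₂ = fun x => (x + γ * (1 - ε) * √π / (2 * D₀) * erfExpSq x) * erfExpSq x := by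
    funext x
    rw [hG₂, div_eq_mul_one_div (G₀ x), hG₀, hFinf, one_div_exp_neg_sq_div_erf]
  have hG₂ξ : G₂ ξ = D₀ * c / (ℓ * √π) := by
    rw [hG₂E, hD₀]
    exact add_mul_erfExpSq_mul_eq_of_convective hD hξpos hβ.le hξeq
  refine ⟨hD₀pos, hD₀ ▸ div_add_lt_self hD herf hβ, hG₂ξ, fun y hy hGy => ?_⟩
  rw [hG₂E] at hGy hG₂ξ
  exact (strictMonoOn_add_mul_erfExpSq_mul_erfExpSq hC).injOn hy.le hξpos.le (hGy.trans hG₂ξ.symm)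

/-- Equivalence of the convective problem with the temperature problem: with
`D₀ = D∞ erf ξ/(k/(h₀√(πα)) + erf ξ)` one has `0 < D₀ < D∞`, and `ξ` is the unique
positive solution of the temperature-problem equation `G₂(x) = D₀ c/(ℓ√π)`. -/
theorem stmt_13 (ρ c k ℓ γ Dinf h₀ α ε ξ D₀ : ℝ)
    (hρ : 0 < ρ) (hc : 0 < c) (hk : 0 < k) (hℓ : 0 < ℓ) (hγ : 0 < γ) (hD : 0 < Dinf)
    (hα : α = k / (ρ * c)) (hε0 : 0 < ε) (hε1 : ε < 1)
    (hh : h₀ > (1 / Dinf) * Real.sqrt (γ * (1 - ε) * ρ * ℓ * k / 2))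
    (hξpos : 0 < ξ)
    (hξeq : (Dinf * c / (ℓ * Real.sqrt π)) * Real.exp (-ξ ^ 2) /
        (k / (h₀ * Real.sqrt (π * α)) + erf ξ) =
      ξ + (γ * (1 - ε) * Real.sqrt π / (2 * Dinf)) *
        (k / (h₀ * Real.sqrt (π * α)) + erf ξ) * Real.exp (ξ ^ 2))
    (hξuniq : ∀ y > (0:ℝ),
      (Dinf * c / (ℓ * Real.sqrt π)) * Real.exp (-y ^ 2) /
          (k / (h₀ * Real.sqrt (π * α)) + erf y) =
        y + (γ * (1 - ε) * Real.sqrt π / (2 * Dinf)) *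
          (k / (h₀ * Real.sqrt (π * α)) + erf y) * Real.exp (y ^ 2) → y = ξ)
    (hD₀ : D₀ = Dinf * erf ξ / (k / (h₀ * Real.sqrt (π * α)) + erf ξ))
    (Finf G₀ G₂ : ℝ → ℝ)
    (hFinf : ∀ x, Finf x = Real.exp (-x ^ 2) / erf x)
    (hG₀ : ∀ x, G₀ x = x + (γ * (1 - ε) * Real.sqrt π / (2 * D₀)) * (1 / Finf x))
    (hG₂ : ∀ x, G₂ x = G₀ x / Finf x) :
    0 < D₀ ∧ D₀ < Dinf ∧
    (G₂ ξ = D₀ * c / (ℓ * Real.sqrt π)) ∧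
    (∀ y > (0:ℝ), G₂ y = D₀ * c / (ℓ * Real.sqrt π) → y = ξ) :=
  stmt_13_general ρ c k ℓ γ Dinf h₀ α ε ξ D₀ hρ hc hk hγ hD hα hε1 hh hξpos hξeq hD₀ Finf G₀ G₂
    hFinf hG₀ hG₂
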